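/- In the undamped conservative case (C = 0, P = 0), the trapezoidal Newmark scheme exactly conserves the total mechanical energy E_n = (1/2) u̇_nᵀ M u̇_n + (1/2) u_nᵀ K u_n, i.e., E_{n+1} = E_n. -/
import Mathlib


open Matrix

/-- In the undamped conservative case the trapezoidal Newmark scheme exactly
conserves the total mechanical energy. -/
theorem newmark_energy_conservation
    {d : ℕ} (M K : Matrix (Fin d) (Fin d) ℝ)
    (hM : M.IsSymm) (hK : K.IsSymm)
    (Δt : ℝ) (u₀ v₀ a₀ u₁ v₁ a₁ : Fin d → ℝ)
    (heom0 : M *ᵥ a₀ + K *ᵥ u₀ = 0)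
    (heom1 : M *ᵥ a₁ + K *ᵥ u₁ = 0)
    (htrap_u : u₁ - u₀ = (Δt / 2) • (v₀ + v₁))
    (htrap_v : v₁ - v₀ = (Δt / 2) • (a₀ + a₁)) :
    (1 / 2) * (v₁ ⬝ᵥ (M *ᵥ v₁)) + (1 / 2) * (u₁ ⬝ᵥ (K *ᵥ u₁))
      = (1 / 2) * (v₀ ⬝ᵥ (M *ᵥ v₀)) + (1 / 2) * (u₀ ⬝ᵥ (K *ᵥ u₀)) := by
  have symm : ∀ (A : Matrix (Fin d) (Fin d) ℝ), A.IsSymm → ∀ x y : Fin d → ℝ,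
      x ⬝ᵥ (A *ᵥ y) = y ⬝ᵥ (A *ᵥ x) := by
    intro A hA x y
    rw [Matrix.dotProduct_mulVec, ← Matrix.mulVec_transpose, hA.eq,
      dotProduct_comm]
  have h1 : (v₁ - v₀) ⬝ᵥ (M *ᵥ (v₀ + v₁))
      = (Δt / 2) * ((v₀ + v₁) ⬝ᵥ (M *ᵥ (a₀ + a₁))) := by
    rw [htrap_v, smul_dotProduct, symm M hM]
    simp
  have h2 : (u₁ - u₀) ⬝ᵥ (K *ᵥ (u₀ + u₁))
      = (Δt / 2) * ((v₀ + v₁) ⬝ᵥ (K *ᵥ (u₀ + u₁))) := by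
    rw [htrap_u, smul_dotProduct]
    simp
  have h3 : (v₀ + v₁) ⬝ᵥ (M *ᵥ (a₀ + a₁)) + (v₀ + v₁) ⬝ᵥ (K *ᵥ (u₀ + u₁)) = 0 := by
    rw [← dotProduct_add, Matrix.mulVec_add, Matrix.mulVec_add]
    have h4 : M *ᵥ a₀ + M *ᵥ a₁ + (K *ᵥ u₀ + K *ᵥ u₁)
        = (M *ᵥ a₀ + K *ᵥ u₀) + (M *ᵥ a₁ + K *ᵥ u₁) := by abel
    rw [h4, heom0, heom1]
    simp
  have key : (v₁ - v₀) ⬝ᵥ (M *ᵥ (v₀ + v₁)) + (u₁ - u₀) ⬝ᵥ (K *ᵥ (u₀ + u₁)) = 0 := by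
    rw [h1, h2, ← mul_add, h3, mul_zero]
  have hMcross := symm M hM v₁ v₀
  have hKcross := symm K hK u₁ u₀
  have expand : (v₁ - v₀) ⬝ᵥ (M *ᵥ (v₀ + v₁)) + (u₁ - u₀) ⬝ᵥ (K *ᵥ (u₀ + u₁))
      = v₁ ⬝ᵥ (M *ᵥ v₁) - v₀ ⬝ᵥ (M *ᵥ v₀) + (u₁ ⬝ᵥ (K *ᵥ u₁) - u₀ ⬝ᵥ (K *ᵥ u₀)) := by
    rw [sub_dotProduct, sub_dotProduct, Matrix.mulVec_add,
      Matrix.mulVec_add, dotProduct_add, dotProduct_add,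
      dotProduct_add, dotProduct_add]
    rw [hMcross, hKcross]
    ring
  rw [expand] at key
  linarith
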